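/- Let (X, d) be a metric space, U a closed process on X, and 𝒟 a universe in 𝒫(X). Assume there exists a pullback 𝒟-absorbing family D̂₀ = {D₀(t) : t ∈ ℝ} for U, that U is pullback 𝒟-asymptotically compact, and moreover that D̂₀ itself belongs to 𝒟. Then the pullback 𝒟-attractor A(t) = cl(⋃_{D̂ ∈ 𝒟} Λ(D̂, t)), where Λ(D̂, t) = ⋂_{s ≤ t} cl(⋃_{τ ≤ s} U(t, τ)D(τ)), satisfies A(t) = Λ(D̂₀, t) and A(t) ⊆ cl(D₀(t)) for every t ∈ ℝ. -/

import Mathlib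

open Filter Set

/-!
Absorption transports pullback ω-limit sets: if `D₀` absorbs `D`, then for `τ ≤ τ₀(s) ≤ s ≤ t`
the cocycle identity writes `U t τ x = U t s (U s τ x)` with `U s τ x ∈ D₀ s`, so every tail
`⋃_{τ ≤ τ₀(s)} U t τ '' D τ` lies in the tail `⋃_{σ ≤ s} U t σ '' D₀ σ`, and `Λ(D, t) ⊆ Λ(D₀, t)`.
Hence when `D₀ ∈ 𝒟` the union defining the attractor is the closed set `Λ(D₀, t)`; and absorbing
`D₀` into itself at time `t` puts a whole tail into `D₀ t`, giving `Λ(D₀, t) ⊆ cl(D₀ t)`.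
-/

section PullbackOmegaLimit

variable {T X : Type*} [Preorder T] [TopologicalSpace X]

def pullbackOmegaLimit (U : T → T → X → X) (D : T → Set X) (t : T) : Set X :=
  ⋂ s ∈ Iic t, closure (⋃ τ ∈ Iic s, U t τ '' D τ)

def PullbackAbsorbs (U : T → T → X → X) (D₀ D : T → Set X) : Prop :=
  ∀ t, ∃ τ₀ ≤ t, ∀ τ ≤ τ₀, U t τ '' D τ ⊆ D₀ t

theorem isClosed_pullbackOmegaLimit (U : T → T → X → X) (D : T → Set X) (t : T) :
    IsClosed (pullbackOmegaLimit U D t) :=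
  isClosed_biInter fun _ _ => isClosed_closure

theorem PullbackAbsorbs.pullbackOmegaLimit_subset_closure {U : T → T → X → X}
    {D₀ D : T → Set X} (habs : PullbackAbsorbs U D₀ D) (t : T) :
    pullbackOmegaLimit U D t ⊆ closure (D₀ t) := by
  obtain ⟨τ₀, hτ₀t, hτ₀⟩ := habs t
  exact (biInter_subset_of_mem (mem_Iic.2 hτ₀t)).trans
    (closure_mono (iUnion₂_subset fun τ hτ => hτ₀ τ hτ))

theorem PullbackAbsorbs.pullbackOmegaLimit_subset {U : T → T → X → X}
    (hU : ∀ τ s t, τ ≤ s → s ≤ t → ∀ x, U t τ x = U t s (U s τ x))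
    {D₀ D : T → Set X} (habs : PullbackAbsorbs U D₀ D) (t : T) :
    pullbackOmegaLimit U D t ⊆ pullbackOmegaLimit U D₀ t := by
  refine subset_iInter₂ fun s hs => ?_
  obtain ⟨τ₀, hτ₀s, hτ₀⟩ := habs s
  have htail : ⋃ τ ∈ Iic τ₀, U t τ '' D τ ⊆ ⋃ σ ∈ Iic s, U t σ '' D₀ σ := by
    rintro _ ⟨_, ⟨τ, rfl⟩, _, ⟨hτ, rfl⟩, x, hx, rfl⟩
    rw [hU τ s t (le_trans hτ hτ₀s) hs x]
    exact mem_iUnion₂.2 ⟨s, le_rfl, mem_image_of_mem _ (hτ₀ τ hτ ⟨x, hx, rfl⟩)⟩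
  exact (biInter_subset_of_mem (mem_Iic.2 (hτ₀s.trans hs))).trans (closure_mono htail)

theorem closure_iUnion_pullbackOmegaLimit_eq {U : T → T → X → X}
    (hU : ∀ τ s t, τ ≤ s → s ≤ t → ∀ x, U t τ x = U t s (U s τ x))
    {𝒟 : Set (T → Set X)} {D₀ : T → Set X} (hD₀ : D₀ ∈ 𝒟)
    (habs : ∀ D ∈ 𝒟, PullbackAbsorbs U D₀ D) (t : T) :
    closure (⋃ D ∈ 𝒟, pullbackOmegaLimit U D t) = pullbackOmegaLimit U D₀ t :=
  (closure_minimal (iUnion₂_subset fun D hD => (habs D hD).pullbackOmegaLimit_subset hU t)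
    (isClosed_pullbackOmegaLimit U D₀ t)).antisymm
    ((subset_biUnion_of_mem (u := fun D => pullbackOmegaLimit U D t) hD₀).trans subset_closure)

end PullbackOmegaLimit

theorem pullback_attractor_eq_of_absorbing_mem_general {X : Type*} [MetricSpace X]
    (U : ℝ → ℝ → X → X)
    (hU2 : ∀ τ s t : ℝ, τ ≤ s → s ≤ t → ∀ x : X, U t τ x = U t s (U s τ x))
    (𝒟 : Set (ℝ → Set X))
    (D₀ : ℝ → Set X)
    (habs : ∀ D ∈ 𝒟, ∀ t : ℝ, ∃ τ₀ ≤ t, ∀ τ ≤ τ₀, U t τ '' D τ ⊆ D₀ t)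
    (hD₀mem : D₀ ∈ 𝒟)
    (A : ℝ → Set X)
    (hA : A = fun t =>
      closure (⋃ D ∈ 𝒟, ⋂ s ∈ Iic t, closure (⋃ τ ∈ Iic s, U t τ '' D τ))) :
    ∀ t : ℝ,
      A t = ⋂ s ∈ Iic t, closure (⋃ τ ∈ Iic s, U t τ '' D₀ τ) ∧
      A t ⊆ closure (D₀ t) := by
  subst hA
  intro t
  have hA_eq : closure (⋃ D ∈ 𝒟, pullbackOmegaLimit U D t) = pullbackOmegaLimit U D₀ t :=
    closure_iUnion_pullbackOmegaLimit_eq hU2 hD₀mem habs t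
  exact ⟨hA_eq, hA_eq.le.trans
    (PullbackAbsorbs.pullbackOmegaLimit_subset_closure (habs D₀ hD₀mem) t)⟩

/-- If the pullback `𝒟`-absorbing family `D̂₀` itself belongs to the universe `𝒟`, then
the pullback `𝒟`-attractor `A(t) = cl(⋃_{D̂ ∈ 𝒟} Λ(D̂, t))`, with
`Λ(D̂, t) = ⋂_{s ≤ t} cl(⋃_{τ ≤ s} U(t,τ)D(τ))`, satisfies
`A(t) = Λ(D̂₀, t)` and `A(t) ⊆ cl(D₀(t))` for every `t`. -/
theorem pullback_attractor_eq_of_absorbing_mem {X : Type*} [MetricSpace X]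
    (U : ℝ → ℝ → X → X)
    (hU1 : ∀ τ : ℝ, ∀ x : X, U τ τ x = x)
    (hU2 : ∀ τ s t : ℝ, τ ≤ s → s ≤ t → ∀ x : X, U t τ x = U t s (U s τ x))
    (hclosed : ∀ τ t : ℝ, τ ≤ t → ∀ (xn : ℕ → X) (x y : X),
      Tendsto xn atTop (nhds x) →
      Tendsto (fun n => U t τ (xn n)) atTop (nhds y) →
      U t τ x = y)
    (𝒟 : Set (ℝ → Set X)) (h𝒟ne : 𝒟.Nonempty)
    (h𝒟 : ∀ D ∈ 𝒟, ∀ t : ℝ, (D t).Nonempty)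
    (D₀ : ℝ → Set X) (hD₀ne : ∀ t : ℝ, (D₀ t).Nonempty)
    (habs : ∀ D ∈ 𝒟, ∀ t : ℝ, ∃ τ₀ ≤ t, ∀ τ ≤ τ₀, U t τ '' D τ ⊆ D₀ t)
    (hcomp : ∀ t : ℝ, ∀ D ∈ 𝒟, ∀ (τn : ℕ → ℝ) (xn : ℕ → X),
      Tendsto τn atTop atBot → (∀ n, xn n ∈ D (τn n)) →
      ∃ (φ : ℕ → ℕ) (z : X), StrictMono φ ∧
        Tendsto (fun n => U t (τn (φ n)) (xn (φ n))) atTop (nhds z))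
    (hD₀mem : D₀ ∈ 𝒟)
    (A : ℝ → Set X)
    (hA : A = fun t =>
      closure (⋃ D ∈ 𝒟, ⋂ s ∈ Iic t, closure (⋃ τ ∈ Iic s, U t τ '' D τ))) :
    ∀ t : ℝ,
      A t = ⋂ s ∈ Iic t, closure (⋃ τ ∈ Iic s, U t τ '' D₀ τ) ∧
      A t ⊆ closure (D₀ t) :=
  pullback_attractor_eq_of_absorbing_mem_general U hU2 𝒟 D₀ habs hD₀mem A hA
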